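/- arXiv:2312.11689 — 5 statements merged into one kernel-verified Lean document; each statement's English description precedes it below -/
import Mathlib

section
/- Let ν ≪ μ be probability measures on (E, 𝓔) and let w = dμ/dν (allowing w = ∞ where ν vanishes). Then for any bounded measurable f and any s > 0, var_μ(f) ≤ s · var_ν(f) + μ({w > s}) · ‖f‖²_osc, where ‖f‖_osc = ess sup_μ f − ess inf_μ f. -/
open MeasureTheory ProbabilityTheory
open scoped ENNReal

/-!
Write `m` for the `ν`-mean of `f` and bound `var_μ(f) ≤ ∫ (f - m)² dμ`. On `{w ≤ s}` the density
identity gives `μ ≤ s • ν`, so that part is at most `s · ∫ (f - m)² dν = s · var_ν(f)`. Since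
`ν ≪ μ`, the mean `m` lies in `[ess inf_μ f, ess sup_μ f]`, so on `{w > s}` the integrand is at
most `‖f‖²_osc`.
-/

section Domination

variable {E : Type*} [MeasurableSpace E] {μ ν : Measure E} {w : E → ℝ≥0∞}

lemma restrict_eq_withDensity_restrict
    (hdens : ∀ B : Set E, MeasurableSet B →
      μ B = (∫⁻ x in B, w x ∂ν) + μ (B ∩ {x | w x = ∞}))
    {A : Set E} (hA : MeasurableSet A) (hAw : ∀ x ∈ A, w x ≠ ∞) :
    μ.restrict A = (ν.withDensity w).restrict A := by
  ext B hB
  have hsing : B ∩ A ∩ {x | w x = ∞} = ∅ :=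
    Set.eq_empty_of_forall_notMem fun x ⟨⟨_, hxA⟩, hx⟩ => hAw x hxA hx
  rw [Measure.restrict_apply hB, Measure.restrict_apply hB, hdens _ (hB.inter hA),
    withDensity_apply _ (hB.inter hA), hsing, measure_empty, add_zero]

lemma restrict_setOf_le_smul (hw : Measurable w)
    (hdens : ∀ B : Set E, MeasurableSet B →
      μ B = (∫⁻ x in B, w x ∂ν) + μ (B ∩ {x | w x = ∞}))
    {c : ℝ≥0∞} (hc : c ≠ ∞) :
    μ.restrict {x | w x ≤ c} ≤ c • ν := by
  have hA : MeasurableSet {x | w x ≤ c} := measurableSet_le hw measurable_const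
  calc μ.restrict {x | w x ≤ c}
      = (ν.restrict {x | w x ≤ c}).withDensity w := by
        rw [restrict_eq_withDensity_restrict hdens hA fun x hx => ne_top_of_le_ne_top hc hx,
          restrict_withDensity hA]
    _ ≤ (ν.restrict {x | w x ≤ c}).withDensity fun _ => c :=
        withDensity_mono (ae_restrict_of_forall_mem hA fun _ hx => hx)
    _ ≤ c • ν := by
        rw [withDensity_const]
        exact smul_le_smul_left c Measure.restrict_le_self

lemma integral_le_mul_integral_add_measureReal_mul [IsFiniteMeasure μ]
    {T : Set E} (hT : MeasurableSet T) {s : ℝ} (hs : 0 ≤ s)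
    (hle : μ.restrict Tᶜ ≤ ENNReal.ofReal s • ν)
    {g : E → ℝ} (hg : 0 ≤ g) (hgμ : Integrable g μ) (hgν : Integrable g ν)
    {M : ℝ} (hM : ∀ᵐ x ∂μ, g x ≤ M) :
    ∫ x, g x ∂μ ≤ s * ∫ x, g x ∂ν + μ.real T * M := by
  have hbody : ∫ x in Tᶜ, g x ∂μ ≤ s * ∫ x, g x ∂ν :=
    calc ∫ x in Tᶜ, g x ∂μ
        ≤ ∫ x, g x ∂(ENNReal.ofReal s • ν) :=
          integral_mono_measure hle (ae_of_all _ hg) (hgν.smul_measure ENNReal.ofReal_ne_top)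
      _ = s * ∫ x, g x ∂ν := by
          rw [integral_smul_measure, ENNReal.toReal_ofReal hs, smul_eq_mul]
  have htail : ∫ x in T, g x ∂μ ≤ μ.real T * M :=
    calc ∫ x in T, g x ∂μ ≤ ∫ _ in T, M ∂μ :=
          setIntegral_mono_ae hgμ.integrableOn (integrable_const M) hM
      _ = μ.real T * M := by rw [setIntegral_const, smul_eq_mul]
  rw [← integral_add_compl hT hgμ]
  linarith

end Domination

section Oscillation

variable {E : Type*} [MeasurableSpace E] {μ ν : Measure E} {f : E → ℝ}

lemma ae_mem_Icc_essInf_essSup (hbd : ∃ C, ∀ x, |f x| ≤ C) :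
    ∀ᵐ x ∂μ, f x ∈ Set.Icc (essInf f μ) (essSup f μ) := by
  obtain ⟨C, hC⟩ := hbd
  filter_upwards [ae_essInf_le (Filter.isBoundedUnder_of ⟨-C, fun x => neg_le_of_abs_le (hC x)⟩),
    ae_le_essSup (Filter.isBoundedUnder_of ⟨C, fun x => (le_abs_self _).trans (hC x)⟩)]
    with x hlo hhi
  exact ⟨hlo, hhi⟩

lemma integral_mem_Icc_essInf_essSup [IsProbabilityMeasure ν] (hac : ν ≪ μ)
    (hbd : ∃ C, ∀ x, |f x| ≤ C) (hfi : Integrable f ν) :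
    ∫ x, f x ∂ν ∈ Set.Icc (essInf f μ) (essSup f μ) := by
  have hmem : ∀ᵐ x ∂ν, f x ∈ Set.Icc (essInf f μ) (essSup f μ) :=
    hac.ae_le (ae_mem_Icc_essInf_essSup hbd)
  constructor
  · simpa using integral_mono_ae (integrable_const _) hfi (hmem.mono fun _ hx => hx.1)
  · simpa using integral_mono_ae hfi (integrable_const _) (hmem.mono fun _ hx => hx.2)

lemma ae_sq_sub_integral_le_sq_osc [IsProbabilityMeasure ν] (hac : ν ≪ μ)
    (hbd : ∃ C, ∀ x, |f x| ≤ C) (hfi : Integrable f ν) :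
    ∀ᵐ x ∂μ, (f x - ∫ y, f y ∂ν) ^ 2 ≤ (essSup f μ - essInf f μ) ^ 2 := by
  have hm := integral_mem_Icc_essInf_essSup hac hbd hfi
  filter_upwards [ae_mem_Icc_essInf_essSup hbd] with x hx
  rw [← sq_abs, ← Real.dist_eq]
  exact pow_le_pow_left₀ dist_nonneg (Real.dist_le_of_mem_Icc hx hm) 2

end Oscillation

lemma memLp_two_of_bound {E : Type*} [MeasurableSpace E] {μ : Measure E} [IsFiniteMeasure μ]
    {f : E → ℝ} (hf : AEStronglyMeasurable f μ) (hbd : ∃ C, ∀ x, |f x| ≤ C) : MemLp f 2 μ :=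
  let ⟨C, hC⟩ := hbd
  (memLp_top_of_bound hf C (ae_of_all _ hC)).mono_exponent le_top

lemma variance_le_iInf_integral_sub_sq {E : Type*} [MeasurableSpace E] {μ : Measure E}
    [IsProbabilityMeasure μ] {f : E → ℝ} (hf : AEStronglyMeasurable f μ) :
    Var[f; μ] ≤ ⨅ t : ℝ, ∫ x, (f x - t) ^ 2 ∂μ :=
  le_ciInf fun t => by
    rw [← variance_sub_const hf t]
    exact variance_le_expectation_sq (hf.sub aestronglyMeasurable_const)

theorem var_le_var_add_tail_osc_general
    {E : Type*} [MeasurableSpace E] (μ ν : Measure E)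
    [IsProbabilityMeasure μ] [IsProbabilityMeasure ν]
    (hac : ν ≪ μ)
    (w : E → ℝ≥0∞) (hw : Measurable w)
    (hdens : ∀ B : Set E, MeasurableSet B →
      μ B = (∫⁻ x in B, w x ∂ν) + μ (B ∩ {x | w x = ∞}))
    (f : E → ℝ) (hf : Measurable f) (hbd : ∃ C, ∀ x, |f x| ≤ C)
    (s : ℝ) (hs : 0 < s) :
    (⨅ t : ℝ, ∫ x, (f x - t) ^ 2 ∂μ)
      ≤ s * (⨅ t : ℝ, ∫ x, (f x - t) ^ 2 ∂ν)
        + (μ {x | ENNReal.ofReal s < w x}).toReal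
          * (essSup f μ - essInf f μ) ^ 2 := by
  set m := ∫ x, f x ∂ν
  set T := {x | ENNReal.ofReal s < w x}
  have hle : μ.restrict Tᶜ ≤ ENNReal.ofReal s • ν := by
    simpa only [T, Set.compl_ofPred, not_lt] using
      restrict_setOf_le_smul hw hdens ENNReal.ofReal_ne_top
  have hf2 : ∀ (ρ : Measure E) [IsFiniteMeasure ρ], MemLp f 2 ρ :=
    fun _ _ => memLp_two_of_bound hf.aestronglyMeasurable hbd
  have hsq : ∀ (ρ : Measure E) [IsFiniteMeasure ρ], Integrable (fun x => (f x - m) ^ 2) ρ :=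
    fun ρ _ => ((hf2 ρ).sub (memLp_const m)).integrable_sq
  have hbdd : BddBelow (Set.range fun t : ℝ => ∫ x, (f x - t) ^ 2 ∂μ) :=
    ⟨0, by rintro _ ⟨t, rfl⟩; exact integral_nonneg fun x => sq_nonneg _⟩
  calc (⨅ t : ℝ, ∫ x, (f x - t) ^ 2 ∂μ)
      ≤ ∫ x, (f x - m) ^ 2 ∂μ := ciInf_le hbdd m
    _ ≤ s * ∫ x, (f x - m) ^ 2 ∂ν + μ.real T * (essSup f μ - essInf f μ) ^ 2 :=
        integral_le_mul_integral_add_measureReal_mul (measurableSet_lt measurable_const hw)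
          hs.le hle (fun x => sq_nonneg _) (hsq μ) (hsq ν)
          (ae_sq_sub_integral_le_sq_osc hac hbd ((hf2 ν).integrable one_le_two))
    _ = s * Var[f; ν] + μ.real T * (essSup f μ - essInf f μ) ^ 2 := by
        rw [variance_eq_integral hf.aemeasurable]
    _ ≤ _ := by
        gcongr
        exacts [variance_le_iInf_integral_sub_sq hf.aestronglyMeasurable, le_rfl]

/-- If `ν ≪ μ` are probability measures and `w = dμ/dν` (with `w = ∞`
allowed on a `ν`-null set carrying the part of `μ` not absolutely continuous w.r.t. `ν`),
then for every bounded measurable `f` and every `s > 0`,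
`var_μ(f) ≤ s · var_ν(f) + μ(w > s) · ‖f‖²_osc`. -/
theorem var_le_var_add_tail_osc
    {E : Type*} [MeasurableSpace E] (μ ν : Measure E)
    [IsProbabilityMeasure μ] [IsProbabilityMeasure ν]
    (hac : ν ≪ μ)
    (w : E → ℝ≥0∞) (hw : Measurable w)
    (hwinf : ν {x | w x = ∞} = 0)
    (hdens : ∀ B : Set E, MeasurableSet B →
      μ B = (∫⁻ x in B, w x ∂ν) + μ (B ∩ {x | w x = ∞}))
    (f : E → ℝ) (hf : Measurable f) (hbd : ∃ C, ∀ x, |f x| ≤ C)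
    (s : ℝ) (hs : 0 < s) :
    (⨅ t : ℝ, ∫ x, (f x - t) ^ 2 ∂μ)
      ≤ s * (⨅ t : ℝ, ∫ x, (f x - t) ^ 2 ∂ν)
        + (μ {x | ENNReal.ofReal s < w x}).toReal
          * (essSup f μ - essInf f μ) ^ 2 :=
  var_le_var_add_tail_osc_general μ ν hac w hw hdens f hf hbd s hs
end

section
/- Let T be a μ-invariant Markov kernel and Ψ a sieve. Define β*(s) := max{0, sup{‖g‖₂² − s·𝓔(T,g) : g ∈ L²₀(μ), Ψ(g) = 1}}. Suppose β*(s) → 0 as s → ∞. Then β* is convex and continuous on (0,∞), nonincreasing, and the function α*(r) := max{0, sup{(‖g‖₂²/𝓔(T,g))·(1 − r/‖g‖₂²) : g ∈ L²₀(μ), Ψ(g) = 1}} is the generalized inverse of β* in the sense that α*(β*(s)) ≤ s and β*(α*(r)) ≤ r for r in the range of β*. -/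
/-!
`β*` is the positive part of a supremum of the affine functions `s ↦ ‖g‖² - s 𝓔(T,g)`, whose
slopes are `≤ 0`; hence it is convex and nonincreasing, and convexity on an open interval gives
continuity. When `𝓔(T,g) > 0` and `‖g‖ ≠ 0`, the term of `α*(r)` indexed by `g` is at most `t`
exactly when `‖g‖² - t 𝓔(T,g) ≤ r`, so each inverse inequality is the defining bound of the
other function. A `g` with `𝓔(T,g) = 0` has `‖g‖² ≤ β*(s)` for all `s`, hence `g = 0` once
`β*(s) → 0`.
-/

open MeasureTheory
open scoped ENNReal RealInnerProductSpace

/-- The Dirichlet form `𝓔(T, f) = ⟪(Id - T) f, f⟫` of an operator on `L²(μ)`. -/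
noncomputable def dirichletForm {E : Type*} [MeasurableSpace E] {μ : Measure E}
    (T : Lp ℝ 2 μ →L[ℝ] Lp ℝ 2 μ) (f : Lp ℝ 2 μ) : ℝ :=
  ⟪f - T f, f⟫

/-- `β*(s) = max {0, sup {‖g‖₂² - s·𝓔(T,g) : g ∈ L²₀(μ), Ψ(g) = 1}}`. -/
noncomputable def betaStar {E : Type*} [MeasurableSpace E] {μ : Measure E}
    (Ψ : Lp ℝ 2 μ → ℝ≥0∞) (T : Lp ℝ 2 μ →L[ℝ] Lp ℝ 2 μ) (s : ℝ) : ℝ :=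
  max 0 (sSup {y : ℝ | ∃ g : Lp ℝ 2 μ,
    (∫ x, g x ∂μ) = 0 ∧ Ψ g = 1 ∧ y = ‖g‖ ^ 2 - s * dirichletForm T g})

/-- `α*(r) = max {0, sup {(‖g‖₂²/𝓔(T,g))·(1 - r/‖g‖₂²) : g ∈ L²₀(μ), Ψ(g) = 1}}`. -/
noncomputable def alphaStar {E : Type*} [MeasurableSpace E] {μ : Measure E}
    (Ψ : Lp ℝ 2 μ → ℝ≥0∞) (T : Lp ℝ 2 μ →L[ℝ] Lp ℝ 2 μ) (r : ℝ) : ℝ :=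
  max 0 (sSup {y : ℝ | ∃ g : Lp ℝ 2 μ,
    (∫ x, g x ∂μ) = 0 ∧ Ψ g = 1 ∧
      y = (‖g‖ ^ 2 / dirichletForm T g) * (1 - r / ‖g‖ ^ 2)})

lemma div_mul_one_sub_div_le_iff {N D r t : ℝ} (hD : 0 < D) (hN : N ≠ 0) :
    N / D * (1 - r / N) ≤ t ↔ N - t * D ≤ r := by
  have hform : N / D * (1 - r / N) = (N - r) / D := by
    field_simp
  rw [hform, div_le_iff₀ hD]
  constructor <;> intro h <;> linarith

lemma div_mul_one_sub_div_le {N D r s : ℝ} (hs : 0 ≤ s) (hD : 0 ≤ D) (h : N - s * D ≤ r) :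
    N / D * (1 - r / N) ≤ s := by
  rcases hD.eq_or_lt with hD | hD
  · simpa [← hD] using hs
  rcases eq_or_ne N 0 with hN | hN
  · simpa [hN] using hs
  exact (div_mul_one_sub_div_le_iff hD hN).2 h

section

variable {E : Type*} [MeasurableSpace E] {μ : Measure E}
  {Ψ : Lp ℝ 2 μ → ℝ≥0∞} {T : Lp ℝ 2 μ →L[ℝ] Lp ℝ 2 μ}

lemma betaStar_nonneg (s : ℝ) : 0 ≤ betaStar Ψ T s := le_max_left _ _

lemma alphaStar_nonneg (r : ℝ) : 0 ≤ alphaStar Ψ T r := le_max_left _ _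

lemma betaStar_le_of_forall {s b : ℝ} (hb : 0 ≤ b)
    (h : ∀ g : Lp ℝ 2 μ, (∫ x, g x ∂μ) = 0 → Ψ g = 1 → ‖g‖ ^ 2 - s * dirichletForm T g ≤ b) :
    betaStar Ψ T s ≤ b := by
  refine max_le hb (Real.sSup_le ?_ hb)
  rintro y ⟨g, hg0, hg1, rfl⟩
  exact h g hg0 hg1

lemma alphaStar_le_of_forall {r b : ℝ} (hb : 0 ≤ b)
    (h : ∀ g : Lp ℝ 2 μ, (∫ x, g x ∂μ) = 0 → Ψ g = 1 →
      ‖g‖ ^ 2 / dirichletForm T g * (1 - r / ‖g‖ ^ 2) ≤ b) :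
    alphaStar Ψ T r ≤ b := by
  refine max_le hb (Real.sSup_le ?_ hb)
  rintro y ⟨g, hg0, hg1, rfl⟩
  exact h g hg0 hg1

lemma le_betaStar (hE : ∀ f : Lp ℝ 2 μ, 0 ≤ dirichletForm T f) {a s : ℝ}
    (ha : ∀ f : Lp ℝ 2 μ, (∫ x, f x ∂μ) = 0 → Ψ f = 1 → ‖f‖ ^ 2 ≤ a) (hs : 0 ≤ s)
    {g : Lp ℝ 2 μ} (hg0 : (∫ x, g x ∂μ) = 0) (hg1 : Ψ g = 1) :
    ‖g‖ ^ 2 - s * dirichletForm T g ≤ betaStar Ψ T s := by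
  have hbdd : BddAbove {y : ℝ | ∃ g : Lp ℝ 2 μ,
      (∫ x, g x ∂μ) = 0 ∧ Ψ g = 1 ∧ y = ‖g‖ ^ 2 - s * dirichletForm T g} := by
    refine ⟨a, ?_⟩
    rintro y ⟨f, hf0, hf1, rfl⟩
    nlinarith [mul_nonneg hs (hE f), ha f hf0 hf1]
  exact (le_csSup hbdd ⟨g, hg0, hg1, rfl⟩).trans (le_max_right _ _)

lemma convexOn_betaStar (hE : ∀ f : Lp ℝ 2 μ, 0 ≤ dirichletForm T f) {a : ℝ}
    (ha : ∀ f : Lp ℝ 2 μ, (∫ x, f x ∂μ) = 0 → Ψ f = 1 → ‖f‖ ^ 2 ≤ a) :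
    ConvexOn ℝ (Set.Ici 0) (betaStar Ψ T) := by
  refine ⟨convex_Ici 0, fun s hs t ht c d hc hd hcd => ?_⟩
  simp only [smul_eq_mul]
  refine betaStar_le_of_forall
    (add_nonneg (mul_nonneg hc (betaStar_nonneg s)) (mul_nonneg hd (betaStar_nonneg t)))
    fun g hg0 hg1 => ?_
  have hs' := le_betaStar hE ha (Set.mem_Ici.1 hs) hg0 hg1
  have ht' := le_betaStar hE ha (Set.mem_Ici.1 ht) hg0 hg1
  calc ‖g‖ ^ 2 - (c * s + d * t) * dirichletForm T g
      = c * (‖g‖ ^ 2 - s * dirichletForm T g) + d * (‖g‖ ^ 2 - t * dirichletForm T g) := by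
        linear_combination (-‖g‖ ^ 2) * hcd
    _ ≤ c * betaStar Ψ T s + d * betaStar Ψ T t := by gcongr

lemma antitoneOn_betaStar (hE : ∀ f : Lp ℝ 2 μ, 0 ≤ dirichletForm T f) {a : ℝ}
    (ha : ∀ f : Lp ℝ 2 μ, (∫ x, f x ∂μ) = 0 → Ψ f = 1 → ‖f‖ ^ 2 ≤ a) :
    AntitoneOn (betaStar Ψ T) (Set.Ici 0) := by
  intro s hs t _ hst
  refine betaStar_le_of_forall (betaStar_nonneg s) fun g hg0 hg1 => ?_
  have hs' := le_betaStar hE ha (Set.mem_Ici.1 hs) hg0 hg1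
  nlinarith [mul_le_mul_of_nonneg_right hst (hE g)]

lemma alphaStar_betaStar_le (hE : ∀ f : Lp ℝ 2 μ, 0 ≤ dirichletForm T f) {a s : ℝ}
    (ha : ∀ f : Lp ℝ 2 μ, (∫ x, f x ∂μ) = 0 → Ψ f = 1 → ‖f‖ ^ 2 ≤ a) (hs : 0 ≤ s) :
    alphaStar Ψ T (betaStar Ψ T s) ≤ s :=
  alphaStar_le_of_forall hs fun _ hg0 hg1 =>
    div_mul_one_sub_div_le hs (hE _) (le_betaStar hE ha hs hg0 hg1)

lemma le_alphaStar_betaStar (hE : ∀ f : Lp ℝ 2 μ, 0 ≤ dirichletForm T f) {a s : ℝ}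
    (ha : ∀ f : Lp ℝ 2 μ, (∫ x, f x ∂μ) = 0 → Ψ f = 1 → ‖f‖ ^ 2 ≤ a) (hs : 0 ≤ s)
    {g : Lp ℝ 2 μ} (hg0 : (∫ x, g x ∂μ) = 0) (hg1 : Ψ g = 1) :
    ‖g‖ ^ 2 / dirichletForm T g * (1 - betaStar Ψ T s / ‖g‖ ^ 2)
      ≤ alphaStar Ψ T (betaStar Ψ T s) := by
  have hbdd : BddAbove {y : ℝ | ∃ g : Lp ℝ 2 μ, (∫ x, g x ∂μ) = 0 ∧ Ψ g = 1 ∧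
      y = ‖g‖ ^ 2 / dirichletForm T g * (1 - betaStar Ψ T s / ‖g‖ ^ 2)} := by
    refine ⟨s, ?_⟩
    rintro y ⟨f, hf0, hf1, rfl⟩
    exact div_mul_one_sub_div_le hs (hE f) (le_betaStar hE ha hs hf0 hf1)
  exact (le_csSup hbdd ⟨g, hg0, hg1, rfl⟩).trans (le_max_right _ _)

lemma norm_eq_zero_of_dirichletForm_eq_zero (hE : ∀ f : Lp ℝ 2 μ, 0 ≤ dirichletForm T f)
    {a : ℝ} (ha : ∀ f : Lp ℝ 2 μ, (∫ x, f x ∂μ) = 0 → Ψ f = 1 → ‖f‖ ^ 2 ≤ a)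
    (hβ0 : Filter.Tendsto (betaStar Ψ T) Filter.atTop (nhds 0))
    {g : Lp ℝ 2 μ} (hg0 : (∫ x, g x ∂μ) = 0) (hg1 : Ψ g = 1) (hgE : dirichletForm T g = 0) :
    ‖g‖ = 0 := by
  have hle : ‖g‖ ^ 2 ≤ 0 := by
    refine ge_of_tendsto hβ0 (Filter.eventually_atTop.2 ⟨0, fun s hs => ?_⟩)
    simpa [hgE] using le_betaStar hE ha hs hg0 hg1
  exact pow_eq_zero_iff two_ne_zero |>.1 (le_antisymm hle (sq_nonneg _))

lemma betaStar_alphaStar_betaStar_le (hE : ∀ f : Lp ℝ 2 μ, 0 ≤ dirichletForm T f) {a s : ℝ}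
    (ha : ∀ f : Lp ℝ 2 μ, (∫ x, f x ∂μ) = 0 → Ψ f = 1 → ‖f‖ ^ 2 ≤ a)
    (hβ0 : Filter.Tendsto (betaStar Ψ T) Filter.atTop (nhds 0)) (hs : 0 ≤ s) :
    betaStar Ψ T (alphaStar Ψ T (betaStar Ψ T s)) ≤ betaStar Ψ T s := by
  set r := betaStar Ψ T s
  set t := alphaStar Ψ T r
  have hr : 0 ≤ r := betaStar_nonneg s
  refine betaStar_le_of_forall hr fun g hg0 hg1 => ?_
  rcases (hE g).eq_or_lt with hD | hD
  · simp [← hD, norm_eq_zero_of_dirichletForm_eq_zero hE ha hβ0 hg0 hg1 hD.symm, hr]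
  rcases le_or_gt (‖g‖ ^ 2) r with hN | hN
  · nlinarith [mul_nonneg (alphaStar_nonneg r : 0 ≤ t) hD.le]
  · exact (div_mul_one_sub_div_le_iff hD (hr.trans_lt hN).ne').1
      (le_alphaStar_betaStar hE ha hs hg0 hg1)

end

theorem betaStar_convex_continuous_and_alphaStar_inverse_general
    {E : Type*} [MeasurableSpace E] (μ : Measure E)
    (T : Lp ℝ 2 μ →L[ℝ] Lp ℝ 2 μ)
    (hE : ∀ f : Lp ℝ 2 μ, 0 ≤ dirichletForm T f)
    (Ψ : Lp ℝ 2 μ → ℝ≥0∞)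
    (a : ℝ) (ha : ∀ f : Lp ℝ 2 μ, (∫ x, f x ∂μ) = 0 → Ψ f = 1 → ‖f‖ ^ 2 ≤ a)
    (hβ0 : Filter.Tendsto (betaStar Ψ T) Filter.atTop (nhds 0)) :
    ConvexOn ℝ (Set.Ioi 0) (betaStar Ψ T) ∧
    ContinuousOn (betaStar Ψ T) (Set.Ioi 0) ∧
    AntitoneOn (betaStar Ψ T) (Set.Ioi 0) ∧
    (∀ s > (0 : ℝ), alphaStar Ψ T (betaStar Ψ T s) ≤ s) ∧
    (∀ r ∈ betaStar Ψ T '' Set.Ioi 0, betaStar Ψ T (alphaStar Ψ T r) ≤ r) := by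
  have hconv : ConvexOn ℝ (Set.Ioi 0) (betaStar Ψ T) :=
    (convexOn_betaStar hE ha).subset Set.Ioi_subset_Ici_self (convex_Ioi 0)
  refine ⟨hconv, hconv.continuousOn isOpen_Ioi,
    (antitoneOn_betaStar hE ha).mono Set.Ioi_subset_Ici_self,
    fun s hs => alphaStar_betaStar_le hE ha hs.le, ?_⟩
  rintro _ ⟨s, hs, rfl⟩
  exact betaStar_alphaStar_betaStar_le hE ha hβ0 hs.le

/-- for a `μ`-invariant Markov operator `T` and sieve `Ψ`, if
`β*(s) → 0` as `s → ∞`, then `β*` is convex, continuous and nonincreasing on `(0, ∞)`,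
and `α*` is its generalized inverse: `α*(β*(s)) ≤ s` and `β*(α*(r)) ≤ r`
for `r` in the range of `β*`. -/
theorem betaStar_convex_continuous_and_alphaStar_inverse
    {E : Type*} [MeasurableSpace E] (μ : Measure E) [IsProbabilityMeasure μ]
    (T : Lp ℝ 2 μ →L[ℝ] Lp ℝ 2 μ)
    (hE : ∀ f : Lp ℝ 2 μ, 0 ≤ dirichletForm T f)
    (Ψ : Lp ℝ 2 μ → ℝ≥0∞)
    (hΨhom : ∀ c : ℝ, 0 < c → ∀ f, Ψ (c • f) = ENNReal.ofReal (c ^ 2) * Ψ f)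
    (a : ℝ) (ha : ∀ f : Lp ℝ 2 μ, (∫ x, f x ∂μ) = 0 → Ψ f = 1 → ‖f‖ ^ 2 ≤ a)
    (hβ0 : Filter.Tendsto (betaStar Ψ T) Filter.atTop (nhds 0)) :
    ConvexOn ℝ (Set.Ioi 0) (betaStar Ψ T) ∧
    ContinuousOn (betaStar Ψ T) (Set.Ioi 0) ∧
    AntitoneOn (betaStar Ψ T) (Set.Ioi 0) ∧
    (∀ s > (0 : ℝ), alphaStar Ψ T (betaStar Ψ T s) ≤ s) ∧
    (∀ r ∈ betaStar Ψ T '' Set.Ioi 0, betaStar Ψ T (alphaStar Ψ T r) ≤ r) :=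
  betaStar_convex_continuous_and_alphaStar_inverse_general μ T hE Ψ a ha hβ0
end

section
/- Let P be a μ-invariant Markov kernel on L²(μ). Then for every n ∈ ℕ, sup{‖Pⁿf − μ(f)‖₂ : ‖f‖_osc ≤ 1} = (1/2)·sup{‖(P*)ⁿg − μ(g)‖₁ : ‖g‖₂ ≤ 1}. -/
/-!
Both sides are governed by the pairing identity
`⟨Pⁿf - μ(f), g⟩ = ⟨f - c, (P*)ⁿg - μ(g)⟩`, valid for every constant `c` because
`(P*)ⁿg - μ(g)` has mean zero. If `‖f‖_osc ≤ 1`, taking for `c` the midpoint of the essential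
range gives `|f - c| ≤ 1/2`, and testing against `g = (Pⁿf - μ(f)) / ‖Pⁿf - μ(f)‖₂` yields
`‖Pⁿf - μ(f)‖₂ ≤ ½ ‖(P*)ⁿg - μ(g)‖₁`. Conversely, for `‖g‖₂ ≤ 1` the function
`f = ½ sign((P*)ⁿg - μ(g))` has oscillation at most `1`, and by Cauchy–Schwarz
`½ ‖(P*)ⁿg - μ(g)‖₁ = ⟨Pⁿf - μ(f), g⟩ ≤ ‖Pⁿf - μ(f)‖₂`.
-/

open MeasureTheory ProbabilityTheory Metric
open scoped ENNReal

noncomputable def kernelAct {E : Type*} [MeasurableSpace E] (P : Kernel E E)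
    (f : E → ℝ) : E → ℝ :=
  fun x => ∫ y, f y ∂(P x)

section Integral

variable {E : Type*} [MeasurableSpace E] {μ : Measure E}

lemma integral_mul_le_sqrt_mul_sqrt {v g : E → ℝ} (hv : MemLp v 2 μ) (hg : MemLp g 2 μ) :
    ∫ x, v x * g x ∂μ ≤ √(∫ x, v x ^ 2 ∂μ) * √(∫ x, g x ^ 2 ∂μ) := by
  have h2 : ENNReal.ofReal 2 = 2 := by norm_num
  have hsq : ∀ w : E → ℝ, ∫ x, ‖w x‖ ^ (2 : ℝ) ∂μ = ∫ x, w x ^ 2 ∂μ := fun w ↦ by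
    simp
  calc ∫ x, v x * g x ∂μ ≤ ∫ x, ‖v x‖ * ‖g x‖ ∂μ := by
        refine integral_mono (hv.integrable_mul hg) (hv.norm.integrable_mul hg.norm) fun x ↦ ?_
        simpa [abs_mul] using le_abs_self (v x * g x)
    _ ≤ √(∫ x, v x ^ 2 ∂μ) * √(∫ x, g x ^ 2 ∂μ) := by
        have := integral_mul_norm_le_Lp_mul_Lq Real.HolderConjugate.two_two (h2 ▸ hv) (h2 ▸ hg)
        simpa only [hsq, Real.sqrt_eq_rpow] using this

lemma exists_integral_mul_eq_sqrt_integral_sq {v : E → ℝ} (hv : Measurable v)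
    (hv2 : MemLp v 2 μ) :
    ∃ g : E → ℝ, Measurable g ∧ MemLp g 2 μ ∧ ∫ x, g x ^ 2 ∂μ ≤ 1 ∧
      ∫ x, v x * g x ∂μ = √(∫ x, v x ^ 2 ∂μ) := by
  -- When `s = 0`, the junk value `v / 0 = 0` is still a valid witness.
  set s := √(∫ x, v x ^ 2 ∂μ)
  have hs : s ^ 2 = ∫ x, v x ^ 2 ∂μ := Real.sq_sqrt (integral_nonneg fun _ ↦ sq_nonneg _)
  refine ⟨fun x ↦ v x / s, hv.div_const s, by simpa [div_eq_mul_inv] using hv2.mul_const s⁻¹,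
    ?_, ?_⟩
  · simp_rw [div_pow]
    rw [integral_div, ← hs]
    exact div_self_le_one _
  · simp_rw [mul_div_assoc', ← sq]
    rw [integral_div, ← hs, sq, mul_self_div_self]

lemma integral_mul_le_of_ae_abs_le {u h : E → ℝ} {r : ℝ} (hu : AEStronglyMeasurable u μ)
    (hur : ∀ᵐ x ∂μ, |u x| ≤ r) (hh : Integrable h μ) :
    ∫ x, u x * h x ∂μ ≤ r * ∫ x, |h x| ∂μ := by
  rw [← integral_const_mul]
  refine integral_mono_ae (hh.bdd_mul hu hur) (hh.abs.const_mul r) ?_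
  filter_upwards [hur] with x hx
  calc u x * h x ≤ |u x| * |h x| := by rw [← abs_mul]; exact le_abs_self _
    _ ≤ r * |h x| := mul_le_mul_of_nonneg_right hx (abs_nonneg _)

lemma sqrt_integral_sq_le_of_ae_abs_le [IsProbabilityMeasure μ] {v : E → ℝ} {t : ℝ}
    (hv : ∀ᵐ x ∂μ, |v x| ≤ t) :
    √(∫ x, v x ^ 2 ∂μ) ≤ t := by
  obtain ⟨x, hx⟩ := hv.exists
  have ht : 0 ≤ t := (abs_nonneg _).trans hx
  have hsq : ∫ x, v x ^ 2 ∂μ ≤ t ^ 2 := by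
    refine (integral_mono_of_nonneg (ae_of_all _ fun x ↦ sq_nonneg (v x)) (integrable_const (t ^ 2))
      (hv.mono fun x hx ↦ ?_)).trans (by simp)
    simpa only [sq_abs] using pow_le_pow_left₀ (abs_nonneg (v x)) hx 2
  simpa [Real.sqrt_sq ht] using Real.sqrt_le_sqrt hsq

lemma ae_mem_closedBall_essSup_essInf {f : E → ℝ} {C : ℝ} (hfC : ∀ᵐ x ∂μ, |f x| ≤ C) :
    ∀ᵐ x ∂μ, f x ∈ closedBall ((essSup f μ + essInf f μ) / 2) ((essSup f μ - essInf f μ) / 2) := by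
  have hsup := ae_le_essSup (μ := μ) (f := f) ⟨C, hfC.mono fun x hx ↦ (abs_le.1 hx).2⟩
  have hinf := ae_essInf_le (μ := μ) (f := f) ⟨-C, hfC.mono fun x hx ↦ (abs_le.1 hx).1⟩
  filter_upwards [hsup, hinf] with x h₁ h₂
  rw [Real.closedBall_eq_Icc]
  constructor <;> linarith

lemma essSup_sub_essInf_le [NeZero μ] {f : E → ℝ} {c r : ℝ}
    (hf : ∀ᵐ x ∂μ, f x ∈ closedBall c r) :
    essSup f μ - essInf f μ ≤ 2 * r := by
  have hf' : ∀ᵐ x ∂μ, c - r ≤ f x ∧ f x ≤ c + r := hf.mono fun x hx ↦ by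
    rwa [Real.closedBall_eq_Icc] at hx
  have hsup : essSup f μ ≤ c + r := essSup_le_of_ae_le _ (hf'.mono fun _ hx ↦ hx.2)
    (Filter.isCoboundedUnder_le_of_eventually_le _ (hf'.mono fun _ hx ↦ hx.1))
  have hinf : c - r ≤ essInf f μ := le_essInf_of_ae_le _ (hf'.mono fun _ hx ↦ hx.1)
    (Filter.isCoboundedUnder_ge_of_eventually_le _ (hf'.mono fun _ hx ↦ hx.2))
  linarith

end Integral

section KernelAct

variable {E : Type*} [MeasurableSpace E] {κ : Kernel E E} {μ : Measure E} {f : E → ℝ}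

lemma measurable_kernelAct [IsSFiniteKernel κ] (hf : Measurable f) :
    Measurable (kernelAct κ f) :=
  (hf.comp measurable_snd).stronglyMeasurable.integral_kernel_prod_right'.measurable

lemma measurable_kernelAct_iterate [IsSFiniteKernel κ] (hf : Measurable f) (n : ℕ) :
    Measurable ((kernelAct κ)^[n] f) := by
  induction n with
  | zero => exact hf
  | succ n ih => rw [Function.iterate_succ_apply']; exact measurable_kernelAct ih

lemma kernelAct_const [IsMarkovKernel κ] (c : ℝ) : kernelAct κ (fun _ ↦ c) = fun _ ↦ c := by
  ext x; simp [kernelAct]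

lemma kernelAct_iterate_const [IsMarkovKernel κ] (c : ℝ) (n : ℕ) :
    (kernelAct κ)^[n] (fun _ ↦ c) = fun _ ↦ c :=
  Function.iterate_fixed (kernelAct_const c) n

lemma ae_kernelAct_mem_closedBall [IsMarkovKernel κ] (hκ : κ ∘ₘ μ = μ) (hf : Measurable f)
    {c r : ℝ} (hfc : ∀ᵐ y ∂μ, f y ∈ closedBall c r) :
    ∀ᵐ x ∂μ, kernelAct κ f x ∈ closedBall c r := by
  rw [← hκ] at hfc
  filter_upwards [Measure.ae_ae_of_ae_comp hfc] with x hx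
  have hbdd : ∀ᵐ y ∂κ x, ‖f y‖ ≤ |c| + r := hx.mono fun y hy ↦ by
    simpa using (norm_le_norm_add_const_of_dist_le hy)
  exact (convex_closedBall c r).integral_mem isClosed_closedBall hx
    (Integrable.of_bound hf.aestronglyMeasurable _ hbdd)

lemma ae_kernelAct_iterate_mem_closedBall [IsMarkovKernel κ] (hκ : κ ∘ₘ μ = μ)
    (hf : Measurable f) {c r : ℝ} (hfc : ∀ᵐ y ∂μ, f y ∈ closedBall c r) (n : ℕ) :
    ∀ᵐ x ∂μ, (kernelAct κ)^[n] f x ∈ closedBall c r := by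
  induction n with
  | zero => exact hfc
  | succ n ih =>
    rw [Function.iterate_succ']
    exact ae_kernelAct_mem_closedBall hκ (measurable_kernelAct_iterate hf n) ih

lemma lintegral_enorm_kernelAct_le (hκ : κ ∘ₘ μ = μ) (hf : Measurable f) :
    ∫⁻ x, ‖kernelAct κ f x‖ₑ ∂μ ≤ ∫⁻ x, ‖f x‖ₑ ∂μ :=
  calc ∫⁻ x, ‖kernelAct κ f x‖ₑ ∂μ ≤ ∫⁻ x, ∫⁻ y, ‖f y‖ₑ ∂κ x ∂μ :=
        lintegral_mono fun _ ↦ enorm_integral_le_lintegral_enorm _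
    _ = ∫⁻ x, ‖f x‖ₑ ∂μ := by
        rw [← Measure.lintegral_bind κ.aemeasurable hf.enorm.aemeasurable, hκ]

lemma integrable_kernelAct [IsSFiniteKernel κ] (hκ : κ ∘ₘ μ = μ) (hf : Measurable f)
    (hfi : Integrable f μ) : Integrable (kernelAct κ f) μ :=
  ⟨(measurable_kernelAct hf).aestronglyMeasurable,
    (lintegral_enorm_kernelAct_le hκ hf).trans_lt hfi.2⟩

lemma integrable_kernelAct_iterate [IsSFiniteKernel κ] (hκ : κ ∘ₘ μ = μ) (hf : Measurable f)
    (hfi : Integrable f μ) (n : ℕ) : Integrable ((kernelAct κ)^[n] f) μ := by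
  induction n with
  | zero => exact hfi
  | succ n ih =>
    rw [Function.iterate_succ_apply']
    exact integrable_kernelAct hκ (measurable_kernelAct_iterate hf n) ih

lemma ae_abs_kernelAct_iterate_sub_integral_le [IsProbabilityMeasure μ] [IsMarkovKernel κ]
    (hκ : κ ∘ₘ μ = μ) (hf : Measurable f) {c r : ℝ} (hfc : ∀ᵐ y ∂μ, f y ∈ closedBall c r) (n : ℕ) :
    ∀ᵐ x ∂μ, |(kernelAct κ)^[n] f x - ∫ z, f z ∂μ| ≤ 2 * r := by
  have hfi : Integrable f μ := Integrable.of_bound hf.aestronglyMeasurable (|c| + r) <|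
    hfc.mono fun y hy ↦ norm_le_norm_add_const_of_dist_le hy
  have hmean : ∫ z, f z ∂μ ∈ closedBall c r :=
    (convex_closedBall c r).integral_mem isClosed_closedBall hfc hfi
  filter_upwards [ae_kernelAct_iterate_mem_closedBall hκ hf hfc n] with x hx
  rw [← Real.dist_eq, two_mul]
  exact (dist_triangle_right _ _ c).trans (add_le_add hx hmean)

end KernelAct

section Adjoint

variable {E : Type*} [MeasurableSpace E] {μ : Measure E} {P Q : Kernel E E}

lemma compProd_eq_map_swap_symm (hadj : μ.compProd Q = (μ.compProd P).map Prod.swap) :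
    μ.compProd P = (μ.compProd Q).map Prod.swap := by
  rw [hadj, Measure.map_map measurable_swap measurable_swap, Prod.swap_swap_eq, Measure.map_id]

lemma comp_eq_of_compProd_eq_map_swap [SFinite μ] [IsSFiniteKernel P] [IsMarkovKernel Q]
    (hadj : μ.compProd Q = (μ.compProd P).map Prod.swap) : P ∘ₘ μ = μ := by
  rw [← Measure.snd_compProd, ← Measure.fst_map_swap, ← hadj, Measure.fst_compProd]

variable [SFinite μ] [IsMarkovKernel P] [IsMarkovKernel Q] {f g : E → ℝ}

lemma integral_kernelAct_mul (hadj : μ.compProd Q = (μ.compProd P).map Prod.swap)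
    (hf : Measurable f)
    {C : ℝ} (hfC : ∀ᵐ y ∂μ, |f y| ≤ C) (hg : Measurable g) (hgi : Integrable g μ) :
    ∫ x, kernelAct P f x * g x ∂μ = ∫ x, f x * kernelAct Q g x ∂μ := by
  set F : E × E → ℝ := fun p ↦ f p.2 * g p.1
  have hFm : Measurable F := (hf.comp measurable_snd).mul (hg.comp measurable_fst)
  have hF : Integrable F (μ.compProd P) := by
    have hCg : Integrable (fun p : E × E ↦ C * |g p.1|) (μ.compProd P) := by
      refine (Integrable.comp_measurable (g := fun x ↦ |g x|) ?_ measurable_fst).const_mul C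
      rw [← Measure.fst, Measure.fst_compProd]; exact hgi.abs
    refine hCg.mono' hFm.aestronglyMeasurable ?_
    have hfC' : ∀ᵐ y ∂(μ.compProd P).map Prod.snd, |f y| ≤ C := by
      rwa [← Measure.snd, Measure.snd_compProd, comp_eq_of_compProd_eq_map_swap hadj]
    filter_upwards [ae_of_ae_map measurable_snd.aemeasurable hfC'] with p hp
    rw [Real.norm_eq_abs, abs_mul]
    exact mul_le_mul_of_nonneg_right hp (abs_nonneg _)
  have hFswap : Integrable (fun p ↦ F p.swap) (μ.compProd Q) := by
    rw [hadj]
    exact (integrable_map_measure (hFm.comp measurable_swap).aestronglyMeasurable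
      measurable_swap.aemeasurable).2 (by simpa [Function.comp_def] using hF)
  calc ∫ x, kernelAct P f x * g x ∂μ = ∫ p, F p ∂(μ.compProd P) := by
        rw [Measure.integral_compProd hF]
        simp only [F, kernelAct, integral_mul_const]
    _ = ∫ p, F p.swap ∂(μ.compProd Q) := by
        rw [hadj, integral_map (f := fun p ↦ F p.swap) measurable_swap.aemeasurable
          (hFm.comp measurable_swap).aestronglyMeasurable]
        simp only [Prod.swap_swap]
    _ = ∫ x, f x * kernelAct Q g x ∂μ := by
        rw [Measure.integral_compProd hFswap]
        simp only [F, Prod.snd_swap, Prod.fst_swap, kernelAct, integral_const_mul]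

lemma integral_kernelAct_iterate_mul
    (hadj : μ.compProd Q = (μ.compProd P).map Prod.swap) (hf : Measurable f)
    {C : ℝ} (hfC : ∀ᵐ y ∂μ, |f y| ≤ C) (hg : Measurable g) (hgi : Integrable g μ) (n : ℕ) :
    ∫ x, (kernelAct P)^[n] f x * g x ∂μ = ∫ x, f x * (kernelAct Q)^[n] g x ∂μ := by
  have hP := comp_eq_of_compProd_eq_map_swap hadj
  have hQ := comp_eq_of_compProd_eq_map_swap (compProd_eq_map_swap_symm hadj)
  induction n generalizing g with
  | zero => rfl
  | succ n ih =>
    have hPnf : ∀ᵐ y ∂μ, |(kernelAct P)^[n] f y| ≤ C := by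
      simpa using ae_kernelAct_iterate_mem_closedBall (c := 0) hP hf (by simpa using hfC) n
    rw [Function.iterate_succ_apply', Function.iterate_succ_apply,
      integral_kernelAct_mul hadj (measurable_kernelAct_iterate hf n) hPnf hg hgi,
      ih (measurable_kernelAct hg) (integrable_kernelAct hQ hg hgi)]

lemma integral_kernelAct_iterate (hadj : μ.compProd Q = (μ.compProd P).map Prod.swap)
    (hg : Measurable g) (hgi : Integrable g μ) (n : ℕ) :
    ∫ x, (kernelAct Q)^[n] g x ∂μ = ∫ x, g x ∂μ := by
  simpa [kernelAct_iterate_const] using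
    (integral_kernelAct_iterate_mul hadj measurable_const (C := 1) (f := fun _ ↦ 1)
      (by simp) hg hgi n).symm

end Adjoint

section Duality

variable {E : Type*} [MeasurableSpace E] {μ : Measure E} [IsProbabilityMeasure μ]
  {P Q : Kernel E E} [IsMarkovKernel P] [IsMarkovKernel Q] {f g : E → ℝ}

lemma integral_centered_kernelAct_iterate_mul
    (hadj : μ.compProd Q = (μ.compProd P).map Prod.swap) (hf : Measurable f)
    {C : ℝ} (hfC : ∀ᵐ y ∂μ, |f y| ≤ C) (hg : Measurable g) (hgi : Integrable g μ) (n : ℕ)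
    (c : ℝ) :
    ∫ x, ((kernelAct P)^[n] f x - ∫ z, f z ∂μ) * g x ∂μ
      = ∫ x, (f x - c) * ((kernelAct Q)^[n] g x - ∫ z, g z ∂μ) ∂μ := by
  have hP := comp_eq_of_compProd_eq_map_swap hadj
  have hQ := comp_eq_of_compProd_eq_map_swap (compProd_eq_map_swap_symm hadj)
  set H := fun x ↦ (kernelAct Q)^[n] g x - ∫ z, g z ∂μ
  have hQg : Integrable ((kernelAct Q)^[n] g) μ := integrable_kernelAct_iterate hQ hg hgi n
  have hH : Integrable H μ := hQg.sub (integrable_const _)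
  have hPnf : ∀ᵐ y ∂μ, ‖(kernelAct P)^[n] f y‖ ≤ C := by
    simpa using ae_kernelAct_iterate_mem_closedBall (c := 0) hP hf (by simpa using hfC) n
  have hfi : Integrable f μ := Integrable.of_bound hf.aestronglyMeasurable C hfC
  have hH0 : ∫ x, H x ∂μ = 0 := by
    simp [H, integral_sub hQg (integrable_const _), integral_kernelAct_iterate hadj hg hgi n]
  calc ∫ x, ((kernelAct P)^[n] f x - ∫ z, f z ∂μ) * g x ∂μ
      = ∫ x, (kernelAct P)^[n] f x * g x ∂μ - (∫ z, f z ∂μ) * ∫ x, g x ∂μ := by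
        simp_rw [sub_mul]
        rw [integral_sub (hgi.bdd_mul (measurable_kernelAct_iterate hf n).aestronglyMeasurable
          hPnf) (hgi.const_mul _), integral_const_mul]
    _ = ∫ x, f x * H x ∂μ := by
        simp_rw [H, mul_sub]
        rw [integral_kernelAct_iterate_mul hadj hf hfC hg hgi n,
          integral_sub (hQg.bdd_mul hf.aestronglyMeasurable hfC) (hfi.mul_const _),
          integral_mul_const]
    _ = ∫ x, (f x - c) * H x ∂μ := by
        simp_rw [sub_mul]
        rw [integral_sub (hH.bdd_mul hf.aestronglyMeasurable hfC) (hH.const_mul _),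
          integral_const_mul, hH0, mul_zero, sub_zero]

lemma memLp_two_kernelAct_iterate_sub_integral (hP : P ∘ₘ μ = μ) (hf : Measurable f)
    {c r : ℝ} (hfc : ∀ᵐ y ∂μ, f y ∈ closedBall c r) (n : ℕ) :
    MemLp (fun x ↦ (kernelAct P)^[n] f x - ∫ z, f z ∂μ) 2 μ :=
  MemLp.of_bound ((measurable_kernelAct_iterate hf n).sub_const _).aestronglyMeasurable (2 * r)
    (ae_abs_kernelAct_iterate_sub_integral_le hP hf hfc n)

lemma exists_sqrt_integral_sq_le_integral_abs
    (hadj : μ.compProd Q = (μ.compProd P).map Prod.swap) (hf : Measurable f)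
    {c r : ℝ} (hfc : ∀ᵐ y ∂μ, f y ∈ closedBall c r) (n : ℕ) :
    ∃ g : E → ℝ, Measurable g ∧ MemLp g 2 μ ∧ ∫ x, g x ^ 2 ∂μ ≤ 1 ∧
      √(∫ x, ((kernelAct P)^[n] f x - ∫ z, f z ∂μ) ^ 2 ∂μ)
        ≤ r * ∫ x, |(kernelAct Q)^[n] g x - ∫ z, g z ∂μ| ∂μ := by
  have hP := comp_eq_of_compProd_eq_map_swap hadj
  have hQ := comp_eq_of_compProd_eq_map_swap (compProd_eq_map_swap_symm hadj)
  obtain ⟨g, hg, hg2, hg1, hvg⟩ := exists_integral_mul_eq_sqrt_integral_sq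
    ((measurable_kernelAct_iterate hf n).sub_const _)
    (memLp_two_kernelAct_iterate_sub_integral hP hf hfc n)
  have hgi : Integrable g μ := hg2.integrable one_le_two
  have hfc' : ∀ᵐ y ∂μ, |f y - c| ≤ r := hfc
  refine ⟨g, hg, hg2, hg1, ?_⟩
  rw [← hvg, integral_centered_kernelAct_iterate_mul hadj hf (C := |c| + r) ?_ hg hgi n c]
  · exact integral_mul_le_of_ae_abs_le (hf.sub_const c).aestronglyMeasurable hfc'
      ((integrable_kernelAct_iterate hQ hg hgi n).sub (integrable_const _))
  · exact hfc.mono fun y hy ↦ norm_le_norm_add_const_of_dist_le hy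

lemma exists_integral_abs_le_sqrt_integral_sq
    (hadj : μ.compProd Q = (μ.compProd P).map Prod.swap) (hg : Measurable g)
    (hg2 : MemLp g 2 μ) (hg1 : ∫ x, g x ^ 2 ∂μ ≤ 1) (n : ℕ) {r : ℝ} (hr : 0 ≤ r) :
    ∃ f : E → ℝ, Measurable f ∧ (∀ x, f x ∈ closedBall 0 r) ∧
      r * ∫ x, |(kernelAct Q)^[n] g x - ∫ z, g z ∂μ| ∂μ
        ≤ √(∫ x, ((kernelAct P)^[n] f x - ∫ z, f z ∂μ) ^ 2 ∂μ) := by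
  have hP := comp_eq_of_compProd_eq_map_swap hadj
  set H := fun x ↦ (kernelAct Q)^[n] g x - ∫ z, g z ∂μ
  have hH : Measurable H := (measurable_kernelAct_iterate hg n).sub_const _
  set f := fun x ↦ if 0 ≤ H x then r else -r
  have hf : Measurable f :=
    Measurable.ite (measurableSet_le measurable_const hH) measurable_const measurable_const
  have hfr : ∀ x, f x ∈ closedBall 0 r := fun x ↦ by
    by_cases h : 0 ≤ H x <;> simp [f, h, abs_of_nonneg hr]
  have hfH : ∀ x, f x * H x = r * |H x| := fun x ↦ by
    by_cases h : 0 ≤ H x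
    · simp [f, h, abs_of_nonneg h]
    · simp [f, h, abs_of_neg (not_le.1 h)]
  refine ⟨f, hf, hfr, ?_⟩
  calc r * ∫ x, |H x| ∂μ = ∫ x, (f x - 0) * H x ∂μ := by
        simp_rw [sub_zero, hfH, integral_const_mul]
    _ = ∫ x, ((kernelAct P)^[n] f x - ∫ z, f z ∂μ) * g x ∂μ :=
        (integral_centered_kernelAct_iterate_mul hadj hf (C := r)
          (ae_of_all _ fun x ↦ by simpa using hfr x) hg (hg2.integrable one_le_two) n 0).symm
    _ ≤ √(∫ x, ((kernelAct P)^[n] f x - ∫ z, f z ∂μ) ^ 2 ∂μ) * √(∫ x, g x ^ 2 ∂μ) :=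
        integral_mul_le_sqrt_mul_sqrt
          (memLp_two_kernelAct_iterate_sub_integral hP hf (ae_of_all _ hfr) n) hg2
    _ ≤ √(∫ x, ((kernelAct P)^[n] f x - ∫ z, f z ∂μ) ^ 2 ∂μ) :=
        mul_le_of_le_one_right (Real.sqrt_nonneg _) (Real.sqrt_le_one.2 hg1)
end Duality

theorem osc_L2_convergence_dual_L2_L1_general
    {E : Type*} [MeasurableSpace E] (μ : Measure E) [IsProbabilityMeasure μ]
    (P Pstar : Kernel E E) [IsMarkovKernel P] [IsMarkovKernel Pstar]
    (hadj : μ.compProd Pstar = (μ.compProd P).map Prod.swap) (n : ℕ) :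
    sSup {y : ℝ | ∃ f : E → ℝ, Measurable f ∧ (∃ C, ∀ᵐ x ∂μ, |f x| ≤ C) ∧
        essSup f μ - essInf f μ ≤ 1 ∧
        y = Real.sqrt (∫ x, ((kernelAct P)^[n] f x - ∫ z, f z ∂μ) ^ 2 ∂μ)}
      = (1 / 2) *
        sSup {y : ℝ | ∃ g : E → ℝ, Measurable g ∧ MemLp g 2 μ ∧
          (∫ x, (g x) ^ 2 ∂μ) ≤ 1 ∧
          y = ∫ x, |(kernelAct Pstar)^[n] g x - ∫ z, g z ∂μ| ∂μ} := by
  set A := {y : ℝ | ∃ f : E → ℝ, Measurable f ∧ (∃ C, ∀ᵐ x ∂μ, |f x| ≤ C) ∧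
    essSup f μ - essInf f μ ≤ 1 ∧ y = √(∫ x, ((kernelAct P)^[n] f x - ∫ z, f z ∂μ) ^ 2 ∂μ)}
  set B := {y : ℝ | ∃ g : E → ℝ, Measurable g ∧ MemLp g 2 μ ∧ (∫ x, (g x) ^ 2 ∂μ) ≤ 1 ∧
    y = ∫ x, |(kernelAct Pstar)^[n] g x - ∫ z, g z ∂μ| ∂μ}
  have hA : ∀ a ∈ A, a ≤ 1 := by
    rintro _ ⟨f, hf, ⟨C, hfC⟩, hosc, rfl⟩
    refine sqrt_integral_sq_le_of_ae_abs_le ?_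
    filter_upwards [ae_abs_kernelAct_iterate_sub_integral_le (comp_eq_of_compProd_eq_map_swap hadj)
      hf (ae_mem_closedBall_essSup_essInf hfC) n] with x hx
    linarith
  have hB : ∀ b ∈ B, b ≤ 2 * sSup A := by
    rintro _ ⟨g, hg, hg2, hg1, rfl⟩
    obtain ⟨f, hf, hfr, hle⟩ :=
      exists_integral_abs_le_sqrt_integral_sq hadj hg hg2 hg1 n (r := 1 / 2) (by norm_num)
    have hfA : √(∫ x, ((kernelAct P)^[n] f x - ∫ z, f z ∂μ) ^ 2 ∂μ) ∈ A :=
      ⟨f, hf, ⟨1 / 2, ae_of_all _ fun x ↦ by simpa using hfr x⟩,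
        by simpa using essSup_sub_essInf_le (ae_of_all μ hfr), rfl⟩
    linarith [le_csSup ⟨1, hA⟩ hfA]
  refine le_antisymm (csSup_le ⟨_, fun _ ↦ 0, measurable_const, ⟨0, by simp⟩, by simp, rfl⟩ ?_) ?_
  · rintro _ ⟨f, hf, ⟨C, hfC⟩, hosc, rfl⟩
    obtain ⟨g, hg, hg2, hg1, hle⟩ :=
      exists_sqrt_integral_sq_le_integral_abs hadj hf (ae_mem_closedBall_essSup_essInf hfC) n
    have hgB : ∫ x, |(kernelAct Pstar)^[n] g x - ∫ z, g z ∂μ| ∂μ ∈ B := ⟨g, hg, hg2, hg1, rfl⟩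
    refine hle.trans (mul_le_mul (by linarith) (le_csSup ⟨_, hB⟩ hgB)
      (integral_nonneg fun _ ↦ abs_nonneg _) (by norm_num))
  · have hBne : B.Nonempty := ⟨_, fun _ ↦ 0, measurable_const, memLp_const 0, by simp, rfl⟩
    linarith [csSup_le hBne hB]

/-- duality between `‖·‖_osc → L²` convergence of `P` and
`L² → L¹` convergence of the adjoint `P*`:
`sup {‖Pⁿf - μ(f)‖₂ : ‖f‖_osc ≤ 1} = (1/2) sup {‖(P*)ⁿ g - μ(g)‖₁ : ‖g‖₂ ≤ 1}`. -/
theorem osc_L2_convergence_dual_L2_L1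
    {E : Type*} [MeasurableSpace E] (μ : Measure E) [IsProbabilityMeasure μ]
    (P Pstar : Kernel E E) [IsMarkovKernel P] [IsMarkovKernel Pstar]
    (hinv : ∀ B : Set E, MeasurableSet B → ∫⁻ x, P x B ∂μ = μ B)
    (hadj : μ.compProd Pstar = (μ.compProd P).map Prod.swap) (n : ℕ) :
    sSup {y : ℝ | ∃ f : E → ℝ, Measurable f ∧ (∃ C, ∀ᵐ x ∂μ, |f x| ≤ C) ∧
        essSup f μ - essInf f μ ≤ 1 ∧
        y = Real.sqrt (∫ x, ((kernelAct P)^[n] f x - ∫ z, f z ∂μ) ^ 2 ∂μ)}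
      = (1 / 2) *
        sSup {y : ℝ | ∃ g : E → ℝ, Measurable g ∧ MemLp g 2 μ ∧
          (∫ x, (g x) ^ 2 ∂μ) ≤ 1 ∧
          y = ∫ x, |(kernelAct Pstar)^[n] g x - ∫ z, g z ∂μ| ∂μ} :=
  osc_L2_convergence_dual_L2_L1_general μ P Pstar hadj n
end

section
/- Let P be a μ-invariant Markov kernel, and suppose P(x,{x}) ≥ ε for μ-almost all x, for some ε > 0. Then for all f ∈ L²₀(μ), 𝓔(P*P, f) ≥ 2ε·𝓔(P, f). -/
/-!
Disintegrating `μ` along `P` and using the adjoint relation, the Dirichlet form of `P*P` becomes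
`½ ∫∫∫ g(x, y) P(z, dx) P(z, dy) μ(dz)` with `g(x, y) = (f y - f x)²`: the chain steps back from
`x` to `z` under `P*` and forward again to `y` under `P`. For fixed `z`, the pairs with `x = z` and
those with `y = z` each contribute `P(z, {z}) ∫ g(z, y) P(z, dy)`, and they overlap only at
`(z, z)`, where `g` vanishes. So the inner double integral is at least
`2 P(z, {z}) ∫ g(z, y) P(z, dy) ≥ 2ε ∫ g(z, y) P(z, dy)`, which integrates to `2ε · 𝓔(P, f)`.
-/

open MeasureTheory ProbabilityTheory
open scoped ENNReal

section

variable {E : Type*} [MeasurableSpace E]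

theorem two_mul_measure_singleton_mul_lintegral_le_lintegral_lintegral
    [MeasurableSingletonClass E] (ν : Measure E) (g : E → E → ℝ≥0∞) (z : E)
    (hg_symm : ∀ x, g x z = g z x) (hg_diag : g z z = 0) :
    2 * ν {z} * ∫⁻ y, g z y ∂ν ≤ ∫⁻ x, ∫⁻ y, g x y ∂ν ∂ν := by
  have h_mass_at_z : ∀ x, ν {z} * g x z ≤ ∫⁻ y, g x y ∂ν := fun x => by
    simpa only [lintegral_singleton, mul_comm] using
      setLIntegral_le_lintegral (μ := ν) {z} (g x)
  have h_off_z : ∫⁻ x, g z x ∂ν = ∫⁻ x in {z}ᶜ, g x z ∂ν := by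
    rw [← lintegral_add_compl (fun x => g z x) (measurableSet_singleton z), lintegral_singleton,
      hg_diag, zero_mul, zero_add]
    exact setLIntegral_congr_fun (measurableSet_singleton z).compl fun x _ => (hg_symm x).symm
  calc 2 * ν {z} * ∫⁻ y, g z y ∂ν
      = ν {z} * ∫⁻ y, g z y ∂ν + ν {z} * ∫⁻ x in {z}ᶜ, g x z ∂ν := by
        rw [← h_off_z, two_mul, add_mul]
    _ ≤ ∫⁻ x in {z}, ∫⁻ y, g x y ∂ν ∂ν + ∫⁻ x in {z}ᶜ, ∫⁻ y, g x y ∂ν ∂ν := by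
        rw [lintegral_singleton, mul_comm]
        gcongr
        exact (lintegral_const_mul_le _ _).trans (lintegral_mono h_mass_at_z)
    _ = ∫⁻ x, ∫⁻ y, g x y ∂ν ∂ν := lintegral_add_compl _ (measurableSet_singleton z)

variable {μ : Measure E} [SFinite μ] {P Pstar : Kernel E E} [IsSFiniteKernel P]
  [IsSFiniteKernel Pstar]

theorem lintegral_lintegral_swap_of_compProd_eq_map_swap
    (hadj : μ.compProd Pstar = (μ.compProd P).map Prod.swap)
    {F : E × E → ℝ≥0∞} (hF : Measurable F) :
    ∫⁻ x, ∫⁻ z, F (x, z) ∂(Pstar x) ∂μ = ∫⁻ z, ∫⁻ x, F (x, z) ∂(P z) ∂μ := by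
  rw [← Measure.lintegral_compProd hF, hadj, lintegral_map hF measurable_swap]
  exact Measure.lintegral_compProd (hF.comp measurable_swap)

theorem lintegral_comp_eq_lintegral_lintegral_lintegral_of_compProd_eq_map_swap
    (hadj : μ.compProd Pstar = (μ.compProd P).map Prod.swap)
    {g : E → E → ℝ≥0∞} (hg : Measurable (Function.uncurry g)) :
    ∫⁻ x, ∫⁻ y, g x y ∂((P ∘ₖ Pstar) x) ∂μ = ∫⁻ z, ∫⁻ x, ∫⁻ y, g x y ∂(P z) ∂(P z) ∂μ := by
  have hF : Measurable fun p : E × E => ∫⁻ y, g p.1 y ∂(P p.2) := by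
    simpa only [Kernel.prodMkLeft_apply] using
      Measurable.lintegral_kernel_prod_right' (κ := Kernel.prodMkLeft E P)
        (f := fun q : (E × E) × E => g q.1.1 q.2)
        (hg.comp ((measurable_fst.comp measurable_fst).prodMk measurable_snd))
  have hg_left : ∀ x, Measurable (g x) := fun x => hg.comp measurable_prodMk_left
  rw [lintegral_congr fun x => Kernel.lintegral_comp P Pstar x (hg_left x)]
  exact lintegral_lintegral_swap_of_compProd_eq_map_swap hadj hF

theorem lintegral_comp_adjoint_ge_of_holding [MeasurableSingletonClass E]
    (hadj : μ.compProd Pstar = (μ.compProd P).map Prod.swap)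
    {ε : ℝ} (hhold : ∀ᵐ x ∂μ, ENNReal.ofReal ε ≤ P x {x})
    {g : E → E → ℝ≥0∞} (hg : Measurable (Function.uncurry g))
    (hg_symm : ∀ x y, g x y = g y x) (hg_diag : ∀ x, g x x = 0) :
    ENNReal.ofReal (2 * ε) * ∫⁻ x, ∫⁻ y, g x y ∂(P x) ∂μ
      ≤ ∫⁻ x, ∫⁻ y, g x y ∂((P ∘ₖ Pstar) x) ∂μ := by
  rw [lintegral_comp_eq_lintegral_lintegral_lintegral_of_compProd_eq_map_swap hadj hg,
    ← lintegral_const_mul _ hg.lintegral_kernel_prod_right]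
  refine lintegral_mono_ae ?_
  filter_upwards [hhold] with z hz
  calc ENNReal.ofReal (2 * ε) * ∫⁻ y, g z y ∂(P z)
      ≤ 2 * P z {z} * ∫⁻ y, g z y ∂(P z) := by
        rw [ENNReal.ofReal_mul zero_le_two, ENNReal.ofReal_ofNat]
        gcongr
    _ ≤ ∫⁻ x, ∫⁻ y, g x y ∂(P z) ∂(P z) :=
        two_mul_measure_singleton_mul_lintegral_le_lintegral_lintegral _ g z
          (fun x => hg_symm x z) (hg_diag z)

end

theorem dirichlet_adjoint_comp_ge_of_holding_general
    {E : Type*} [MeasurableSpace E] [MeasurableSingletonClass E]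
    (μ : Measure E) [IsProbabilityMeasure μ]
    (P Pstar : Kernel E E) [IsMarkovKernel P] [IsMarkovKernel Pstar]
    (hadj : μ.compProd Pstar = (μ.compProd P).map Prod.swap)
    (ε : ℝ)
    (hhold : ∀ᵐ x ∂μ, ENNReal.ofReal ε ≤ P x {x})
    (f : E → ℝ) (hf : Measurable f) :
    ENNReal.ofReal (2 * ε) *
        (((1 : ℝ≥0∞) / 2) * ∫⁻ x, ∫⁻ y, ENNReal.ofReal ((f y - f x) ^ 2) ∂(P x) ∂μ)
      ≤ ((1 : ℝ≥0∞) / 2) *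
          ∫⁻ x, ∫⁻ y, ENNReal.ofReal ((f y - f x) ^ 2) ∂((P ∘ₖ Pstar) x) ∂μ := by
  have hg : Measurable (Function.uncurry fun x y => ENNReal.ofReal ((f y - f x) ^ 2)) :=
    ENNReal.measurable_ofReal.comp
      (((hf.comp measurable_snd).sub (hf.comp measurable_fst)).pow_const 2)
  rw [mul_left_comm]
  gcongr
  exact lintegral_comp_adjoint_ge_of_holding hadj hhold hg
    (fun x y => by rw [← neg_sub, neg_sq]) (fun x => by simp)

/-- Let `P` be a `μ`-invariant Markov kernel with adjoint `P*` and with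
holding probabilities `P(x, {x}) ≥ ε` for `μ`-almost every `x`. Then for every
mean-zero `f ∈ L²(μ)`, the Dirichlet forms satisfy `𝓔(P*P, f) ≥ 2ε·𝓔(P, f)`. -/
theorem dirichlet_adjoint_comp_ge_of_holding
    {E : Type*} [MeasurableSpace E] [MeasurableSingletonClass E]
    (μ : Measure E) [IsProbabilityMeasure μ]
    (P Pstar : Kernel E E) [IsMarkovKernel P] [IsMarkovKernel Pstar]
    (hinv : ∀ B : Set E, MeasurableSet B → ∫⁻ x, P x B ∂μ = μ B)
    (hadj : μ.compProd Pstar = (μ.compProd P).map Prod.swap)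
    (ε : ℝ) (hε : 0 < ε)
    (hhold : ∀ᵐ x ∂μ, ENNReal.ofReal ε ≤ P x {x})
    (f : E → ℝ) (hf : Measurable f) (hf2 : MemLp f 2 μ)
    (hf0 : (∫ x, f x ∂μ) = 0) :
    ENNReal.ofReal (2 * ε) *
        (((1 : ℝ≥0∞) / 2) * ∫⁻ x, ∫⁻ y, ENNReal.ofReal ((f y - f x) ^ 2) ∂(P x) ∂μ)
      ≤ ((1 : ℝ≥0∞) / 2) *
          ∫⁻ x, ∫⁻ y, ENNReal.ofReal ((f y - f x) ^ 2) ∂((P ∘ₖ Pstar) x) ∂μ :=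
  dirichlet_adjoint_comp_ge_of_holding_general μ P Pstar hadj ε hhold f hf
end

section
/- Let E = [1,∞), a > 1, b ∈ (0, a−1). Let ν be the probability measure on E with density ν(x) = (a−1)·x^{−a}, w(x) = x^{−b}, and define the Markov kernel P(x,·) = w(x)·ν(·) + (1−w(x))·δ_x(·). Then P is reversible with respect to the probability measure μ with density μ(x) = (a−b−1)·x^{−(a−b)}, and for every f ∈ L²(μ), the Dirichlet form satisfies 𝓔(P, f) = ν(w⁻¹)⁻¹ · var_ν(f), where ν(w⁻¹) = ∫ w(x)⁻¹ ν(dx). -/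
open MeasureTheory
open scoped ENNReal

noncomputable def powerLaw (a : ℝ) : Measure ℝ :=
  (volume.restrict (Set.Ici 1)).withDensity fun x => ENNReal.ofReal ((a - 1) * x ^ (-a))

noncomputable def jumpKernel (a b : ℝ) (x : ℝ) : Measure ℝ :=
  ENNReal.ofReal (x ^ (-b)) • powerLaw a
    + (1 - ENNReal.ofReal (x ^ (-b))) • Measure.dirac x

/-
For `P(x, ·) = w(x) ν + (1 - w(x)) δ_x` and any `μ` with `w μ = c ν`, the measure `μ(dx) P(x, dy)`
is `c ν(dx) ν(dy)` plus a part on the diagonal; both are symmetric, which is reversibility. The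
diagonal part does not see `(f y - f x)²`, so `𝓔(P, f) = (c / 2) ∬ (f y - f x)² dν dν = c var_ν f`.
For the power laws `x^{-b} (a-b-1) x^{-(a-b)} = c (a-1) x^{-a}` with `c = (a-b-1)/(a-1)`, which is
`ν(x^b)⁻¹`, and `ν ≤ c⁻¹ μ` because `w ≤ 1`, so `L²(μ) ⊆ L²(ν)`.
-/

namespace MeasureTheory

variable {α : Type*} [MeasurableSpace α]

noncomputable def jumpMeasure (w : α → ℝ≥0∞) (ν : Measure α) (x : α) : Measure α :=
  w x • ν + (1 - w x) • Measure.dirac x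

section Reversible

variable {μ ν : Measure α} {w : α → ℝ≥0∞} {c : ℝ≥0∞}

theorem setLIntegral_jumpMeasure_apply (hw : Measurable w) (h : μ.withDensity w = c • ν)
    {A B : Set α} (hA : MeasurableSet A) (hB : MeasurableSet B) :
    ∫⁻ x in A, jumpMeasure w ν x B ∂μ = c * (ν A * ν B) + ∫⁻ x in B ∩ A, (1 - w x) ∂μ := by
  have h_apply : ∀ x, jumpMeasure w ν x B = w x * ν B + B.indicator (fun y => 1 - w y) x := by
    intro x
    by_cases hx : x ∈ B <;> simp [jumpMeasure, Measure.dirac_apply' _ hB, hx]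
  simp_rw [h_apply]
  rw [lintegral_add_left (hw.mul_const _), lintegral_mul_const _ hw, ← withDensity_apply _ hA, h,
    Measure.smul_apply, smul_eq_mul, mul_assoc, lintegral_indicator hB,
    Measure.restrict_restrict hB]

theorem jumpMeasure_reversible (hw : Measurable w) (h : μ.withDensity w = c • ν)
    {A B : Set α} (hA : MeasurableSet A) (hB : MeasurableSet B) :
    ∫⁻ x in A, jumpMeasure w ν x B ∂μ = ∫⁻ x in B, jumpMeasure w ν x A ∂μ := by
  rw [setLIntegral_jumpMeasure_apply hw h hA hB, setLIntegral_jumpMeasure_apply hw h hB hA,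
    Set.inter_comm, mul_comm (ν A)]

theorem le_inv_smul_of_withDensity_eq_smul (hw : ∀ᵐ x ∂μ, w x ≤ 1) (hc₀ : c ≠ 0) (hc : c ≠ ∞)
    (h : μ.withDensity w = c • ν) : ν ≤ c⁻¹ • μ := by
  calc ν = c⁻¹ • μ.withDensity w := by rw [h, smul_smul, ENNReal.inv_mul_cancel hc₀ hc, one_smul]
    _ ≤ c⁻¹ • μ.withDensity 1 := by gcongr; exact withDensity_mono hw
    _ = c⁻¹ • μ := by rw [withDensity_one]

end Reversible

section Dirichlet

variable {μ ν : Measure α} {w : α → ℝ≥0∞} {c : ℝ≥0∞} {f : α → ℝ}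

theorem integral_sub_const_sq [IsProbabilityMeasure ν] (hf : MemLp f 2 ν) (t : ℝ) :
    ∫ y, (f y - t) ^ 2 ∂ν = ∫ y, f y ^ 2 ∂ν - 2 * t * ∫ y, f y ∂ν + t ^ 2 := by
  have hf1 : Integrable f ν := hf.integrable one_le_two
  have hf2 : Integrable (fun y => f y ^ 2) ν := hf.integrable_sq
  have hlin : Integrable (fun y => f y ^ 2 - 2 * f y * t) ν :=
    hf2.sub ((hf1.const_mul 2).mul_const t)
  simp_rw [sub_sq]
  rw [integral_add hlin (integrable_const _), integral_sub hf2 ((hf1.const_mul 2).mul_const t),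
    integral_mul_const, integral_const_mul, integral_const, probReal_univ, one_smul]
  ring

theorem integral_integral_sub_sq [IsProbabilityMeasure ν] (hf : MemLp f 2 ν) :
    ∫ x, ∫ y, (f y - f x) ^ 2 ∂ν ∂ν = 2 * (∫ x, f x ^ 2 ∂ν - (∫ x, f x ∂ν) ^ 2) := by
  have hf1 : Integrable f ν := hf.integrable one_le_two
  have hf2 : Integrable (fun y => f y ^ 2) ν := hf.integrable_sq
  set m₂ := ∫ y, f y ^ 2 ∂ν
  set m₁ := ∫ y, f y ∂ν
  have hlin : Integrable (fun x => m₂ - 2 * f x * m₁) ν :=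
    (integrable_const _).sub ((hf1.const_mul 2).mul_const _)
  simp_rw [integral_sub_const_sq hf]
  rw [integral_add hlin hf2, integral_sub (integrable_const _) ((hf1.const_mul 2).mul_const _),
    integral_mul_const, integral_const_mul, integral_const, probReal_univ, one_smul]
  ring

theorem integral_jumpMeasure_sub_sq [MeasurableSingletonClass α] [IsFiniteMeasure ν]
    (hf : MemLp f 2 ν) {x : α} (hx : w x ≠ ∞) :
    ∫ y, (f y - f x) ^ 2 ∂(jumpMeasure w ν x) = (w x).toReal * ∫ y, (f y - f x) ^ 2 ∂ν := by
  have hν : Integrable (fun y => (f y - f x) ^ 2) ν := (hf.sub (memLp_const _)).integrable_sq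
  have hδ : Integrable (fun y => (f y - f x) ^ 2) (Measure.dirac x) :=
    integrable_dirac ENNReal.coe_lt_top
  rw [jumpMeasure, integral_add_measure (hν.smul_measure hx) (hδ.smul_measure ?_),
    integral_smul_measure, integral_smul_measure, integral_dirac]
  · simp
  · exact ENNReal.sub_ne_top ENNReal.one_ne_top

theorem jumpMeasure_dirichlet [MeasurableSingletonClass α] [IsProbabilityMeasure ν]
    (hw : Measurable w) (hw_top : ∀ x, w x ≠ ∞) (h : μ.withDensity w = c • ν) (hf : MemLp f 2 ν) :
    (1 / 2) * ∫ x, ∫ y, (f y - f x) ^ 2 ∂(jumpMeasure w ν x) ∂μ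
      = c.toReal * (∫ x, f x ^ 2 ∂ν - (∫ x, f x ∂ν) ^ 2) := by
  have h_outer : ∫ x, ∫ y, (f y - f x) ^ 2 ∂(jumpMeasure w ν x) ∂μ
      = c.toReal * ∫ x, ∫ y, (f y - f x) ^ 2 ∂ν ∂ν := by
    calc ∫ x, ∫ y, (f y - f x) ^ 2 ∂(jumpMeasure w ν x) ∂μ
        = ∫ x, (w x).toReal • ∫ y, (f y - f x) ^ 2 ∂ν ∂μ := by
          simp_rw [integral_jumpMeasure_sub_sq hf (hw_top _), smul_eq_mul]
      _ = ∫ x, ∫ y, (f y - f x) ^ 2 ∂ν ∂(μ.withDensity w) :=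
          (integral_withDensity_eq_integral_toReal_smul hw
            (ae_of_all _ fun x => (hw_top x).lt_top) _).symm
      _ = c.toReal * ∫ x, ∫ y, (f y - f x) ^ 2 ∂ν ∂ν := by
          rw [h, integral_smul_measure, smul_eq_mul]
  rw [h_outer, integral_integral_sub_sq hf]
  ring

end Dirichlet

end MeasureTheory

open Real

theorem ae_one_le_powerLaw (a : ℝ) : ∀ᵐ x ∂powerLaw a, 1 ≤ x :=
  (withDensity_absolutelyContinuous _ _).ae_le (ae_restrict_mem measurableSet_Ici)

theorem integral_powerLaw {a : ℝ} (ha : 1 ≤ a) (g : ℝ → ℝ) :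
    ∫ x, g x ∂powerLaw a = ∫ x in Set.Ioi 1, (a - 1) * x ^ (-a) * g x := by
  rw [powerLaw, integral_withDensity_eq_integral_toReal_smul (by fun_prop)
    (ae_of_all _ fun _ => ENNReal.ofReal_lt_top), ← integral_Ici_eq_integral_Ioi]
  refine setIntegral_congr_fun measurableSet_Ici fun x hx => ?_
  have hx₀ : 0 ≤ x := zero_le_one.trans hx
  rw [ENNReal.toReal_ofReal (by positivity), smul_eq_mul]

theorem integral_rpow_powerLaw {a t : ℝ} (ha : 1 < a) (ht : t < a - 1) :
    ∫ x, x ^ t ∂powerLaw a = (a - 1) / (a - 1 - t) := by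
  have h_rpow : ∀ x ∈ Set.Ioi (1 : ℝ), (a - 1) * x ^ (-a) * x ^ t = (a - 1) * x ^ (t - a) := by
    intro x hx
    rw [mul_assoc, ← rpow_add (zero_lt_one.trans hx), neg_add_eq_sub]
  rw [integral_powerLaw ha.le, setIntegral_congr_fun measurableSet_Ioi h_rpow, integral_const_mul,
    integral_Ioi_rpow_of_lt (by linarith) zero_lt_one, one_rpow]
  have : t - a + 1 ≠ 0 := by linarith
  have : a - 1 - t ≠ 0 := by linarith
  field_simp
  ring

theorem isProbabilityMeasure_powerLaw {a : ℝ} (ha : 1 < a) : IsProbabilityMeasure (powerLaw a) := by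
  have h := integral_rpow_powerLaw ha (t := 0) (by linarith)
  simp only [rpow_zero, integral_const, smul_eq_mul, mul_one, sub_zero,
    div_self (by linarith : a - 1 ≠ 0)] at h
  exact ⟨(ENNReal.toReal_eq_one_iff _).mp h⟩

theorem powerLaw_withDensity_rpow_neg {a b : ℝ} (ha : 1 < a) (hb : b < a - 1) :
    (powerLaw (a - b)).withDensity (fun x => ENNReal.ofReal (x ^ (-b)))
      = ENNReal.ofReal ((a - b - 1) / (a - 1)) • powerLaw a := by
  rw [powerLaw, powerLaw, ← withDensity_mul _ (by fun_prop) (by fun_prop),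
    ← withDensity_smul _ (by fun_prop)]
  refine withDensity_congr_ae ?_
  filter_upwards [ae_restrict_mem measurableSet_Ici] with x hx
  have hx₀ : 0 < x := zero_lt_one.trans_le hx
  have : a - 1 ≠ 0 := by linarith
  simp only [Pi.mul_apply, Pi.smul_apply, smul_eq_mul]
  rw [← ENNReal.ofReal_mul (by nlinarith [rpow_pos_of_pos hx₀ (-(a - b))]),
    ← ENNReal.ofReal_mul (div_nonneg (by linarith) (by linarith)), mul_assoc, ← rpow_add hx₀]
  congr 1
  field_simp
  ring_nf

/-- for `a > 1`, `0 < b < a - 1`, the kernel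
`P(x,·) = x^{-b} ν + (1 - x^{-b}) δ_x` with `ν` the `(a-1)x^{-a}` law on `[1,∞)` is
reversible with respect to `μ = powerLaw (a - b)` (density `(a-b-1)x^{-(a-b)}`), and
its Dirichlet form satisfies `𝓔(P, f) = ν(w⁻¹)⁻¹ · var_ν(f)` for all `f ∈ L²(μ)`. -/
theorem jumpKernel_reversible_and_dirichlet
    (a b : ℝ) (ha : 1 < a) (hb0 : 0 < b) (hb : b < a - 1) :
    (∀ A B : Set ℝ, MeasurableSet A → MeasurableSet B →
      ∫⁻ x in A, jumpKernel a b x B ∂(powerLaw (a - b))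
        = ∫⁻ x in B, jumpKernel a b x A ∂(powerLaw (a - b))) ∧
    ∀ f : ℝ → ℝ, Measurable f → MemLp f 2 (powerLaw (a - b)) →
      (1 / 2) * ∫ x, (∫ y, (f y - f x) ^ 2 ∂(jumpKernel a b x)) ∂(powerLaw (a - b))
        = (∫ x, x ^ b ∂(powerLaw a))⁻¹ *
            ((∫ x, (f x) ^ 2 ∂(powerLaw a)) - (∫ x, f x ∂(powerLaw a)) ^ 2) := by
  have hker : jumpKernel a b = jumpMeasure (fun x => ENNReal.ofReal (x ^ (-b))) (powerLaw a) := rfl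
  have hw : Measurable fun x : ℝ => ENNReal.ofReal (x ^ (-b)) := by fun_prop
  have hν := isProbabilityMeasure_powerLaw ha
  have hdens := powerLaw_withDensity_rpow_neg ha hb
  have hc : 0 < (a - b - 1) / (a - 1) := div_pos (by linarith) (by linarith)
  rw [hker]
  refine ⟨fun A B hA hB => jumpMeasure_reversible hw hdens hA hB, fun f _ hf => ?_⟩
  have hw_le_one : ∀ᵐ x ∂powerLaw (a - b), ENNReal.ofReal (x ^ (-b)) ≤ 1 :=
    (ae_one_le_powerLaw _).mono fun x hx =>
      ENNReal.ofReal_le_one.2 (rpow_le_one_of_one_le_of_nonpos hx (by linarith))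
  have hfν : MemLp f 2 (powerLaw a) := hf.of_measure_le_smul (ENNReal.inv_ne_top.2 (by positivity))
    (le_inv_smul_of_withDensity_eq_smul hw_le_one (by positivity) ENNReal.ofReal_ne_top hdens)
  rw [jumpMeasure_dirichlet hw (fun _ => ENNReal.ofReal_ne_top) hdens hfν,
    integral_rpow_powerLaw ha hb, ENNReal.toReal_ofReal hc.le]
  have : a - 1 - b ≠ 0 := by linarith
  field_simp
  ring
end
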